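/- arXiv:2310.16976 — 7 statements merged into one kernel-verified Lean document; each statement's English description precedes it below -/
import Mathlib

section
/- For any two-player constant-sum game (A, B) with ⟨x₁, A x₂⟩ + ⟨x₁, B x₂⟩ = V for all strategies, and for any μ > -1, the game is (1+μ, μ)-smooth: there exists (x₁*, x₂*) maximizing welfare such that u₁(x₁*, x₂) + u₂(x₂*, x₁) ≥ (1+μ)·OPT - μ·SW(x₁,x₂) for all (x₁, x₂). -/
/-!
Since the welfare is constantly `V`, every profile maximizes it and the right-hand side of the
smoothness inequality is `V`. Writing `u₂(x₁, x₂*) = V - u₁(x₁, x₂*)`, the inequality becomes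
`u₁(x₁, x₂*) ≤ u₁(x₁*, x₂)` for all `x₁, x₂`: `(x₁*, x₂*)` must be a saddle point of the bilinear
payoff `u₁`, which exists by von Neumann's minimax theorem.
-/

open scoped Matrix

theorem LinearMap.exists_isSaddlePointOn {E F : Type*}
    [AddCommGroup E] [Module ℝ E] [TopologicalSpace E] [IsTopologicalAddGroup E]
    [ContinuousSMul ℝ E] [T2Space E] [FiniteDimensional ℝ E]
    [AddCommGroup F] [Module ℝ F] [TopologicalSpace F] [IsTopologicalAddGroup F]
    [ContinuousSMul ℝ F] [T2Space F] [FiniteDimensional ℝ F]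
    (f : E →ₗ[ℝ] F →ₗ[ℝ] ℝ) {X : Set E} {Y : Set F}
    (hXne : X.Nonempty) (hXc : IsCompact X) (hXconv : Convex ℝ X)
    (hYne : Y.Nonempty) (hYc : IsCompact Y) (hYconv : Convex ℝ Y) :
    ∃ a ∈ X, ∃ b ∈ Y, IsSaddlePointOn X Y (fun x y => f x y) a b :=
  Sion.exists_isSaddlePointOn hXne hXconv hXc
    (fun y _ =>
      (f.flip y).continuous_of_finiteDimensional.lowerSemicontinuous.lowerSemicontinuousOn X)
    (fun y _ => ((f.flip y).convexOn hXconv).quasiconvexOn)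
    hYconv hYne hYc
    (fun x _ =>
      (f x).continuous_of_finiteDimensional.upperSemicontinuous.upperSemicontinuousOn Y)
    (fun x _ => ((f x).concaveOn hYconv).quasiconcaveOn)

theorem two_player_constant_sum_smooth_general
    (d : ℕ) (X1 X2 : Set (Fin d → ℝ)) (A B : Matrix (Fin d) (Fin d) ℝ) (V : ℝ)
    (hX1 : X1.Nonempty) (hX2 : X2.Nonempty)
    (hX1c : IsCompact X1) (hX2c : IsCompact X2)
    (hX1conv : Convex ℝ X1) (hX2conv : Convex ℝ X2)
    (hconst : ∀ x1 ∈ X1, ∀ x2 ∈ X2, x1 ⬝ᵥ A.mulVec x2 + x1 ⬝ᵥ B.mulVec x2 = V)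
    (μ : ℝ) :
    ∃ x1s ∈ X1, ∃ x2s ∈ X2,
      (∀ y1 ∈ X1, ∀ y2 ∈ X2,
        y1 ⬝ᵥ A.mulVec y2 + y1 ⬝ᵥ B.mulVec y2 ≤
          x1s ⬝ᵥ A.mulVec x2s + x1s ⬝ᵥ B.mulVec x2s) ∧
      ∀ x1 ∈ X1, ∀ x2 ∈ X2,
        x1s ⬝ᵥ A.mulVec x2 + x1 ⬝ᵥ B.mulVec x2s ≥
          (1 + μ) * V - μ * (x1 ⬝ᵥ A.mulVec x2 + x1 ⬝ᵥ B.mulVec x2) := by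
  obtain ⟨x2s, hx2s, x1s, hx1s, hsaddle⟩ :=
    (Matrix.toLinearMap₂' ℝ A).flip.exists_isSaddlePointOn hX2 hX2c hX2conv hX1 hX1c hX1conv
  simp only [LinearMap.flip_apply, Matrix.toLinearMap₂'_apply'] at hsaddle
  refine ⟨x1s, hx1s, x2s, hx2s, fun y1 hy1 y2 hy2 => ?_, fun x1 hx1 x2 hx2 => ?_⟩
  · rw [hconst y1 hy1 y2 hy2, hconst x1s hx1s x2s hx2s]
  · have hB : x1 ⬝ᵥ B.mulVec x2s = V - x1 ⬝ᵥ A.mulVec x2s := by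
      linarith [hconst x1 hx1 x2s hx2s]
    rw [hconst x1 hx1 x2 hx2, hB]
    linarith [hsaddle x2 hx2 x1 hx1]

/-- any two-player constant-sum game is (1+μ, μ)-smooth for every μ > -1. -/
theorem two_player_constant_sum_smooth
    (d : ℕ) (X1 X2 : Set (Fin d → ℝ)) (A B : Matrix (Fin d) (Fin d) ℝ) (V : ℝ)
    (hX1 : X1.Nonempty) (hX2 : X2.Nonempty)
    (hX1c : IsCompact X1) (hX2c : IsCompact X2)
    (hX1conv : Convex ℝ X1) (hX2conv : Convex ℝ X2)
    (hconst : ∀ x1 ∈ X1, ∀ x2 ∈ X2, x1 ⬝ᵥ A.mulVec x2 + x1 ⬝ᵥ B.mulVec x2 = V)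
    (hV : 0 < V) (μ : ℝ) (hμ : -1 < μ) :
    ∃ x1s ∈ X1, ∃ x2s ∈ X2,
      (∀ y1 ∈ X1, ∀ y2 ∈ X2,
        y1 ⬝ᵥ A.mulVec y2 + y1 ⬝ᵥ B.mulVec y2 ≤
          x1s ⬝ᵥ A.mulVec x2s + x1s ⬝ᵥ B.mulVec x2s) ∧
      ∀ x1 ∈ X1, ∀ x2 ∈ X2,
        x1s ⬝ᵥ A.mulVec x2 + x1 ⬝ᵥ B.mulVec x2s ≥
          (1 + μ) * V - μ * (x1 ⬝ᵥ A.mulVec x2 + x1 ⬝ᵥ B.mulVec x2) :=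
  two_player_constant_sum_smooth_general d X1 X2 A B V hX1 hX2 hX1c hX2c hX1conv hX2conv hconst μ
end

section
/- For any n-player normal-form game with strategic sensitivity ε (i.e., any unilateral action change by a player i' ≠ i changes player i's utility by at most an additive ε), the Lipschitz constant of the game operator with respect to the ℓ₂ norm is at most ε·n·max_i |A_i|. -/
open Finset

lemma step_bound {n : ℕ} {A : Fin n → Type} [∀ i, Fintype (A i)] [∀ i, DecidableEq (A i)]
    [∀ i, Nonempty (A i)]
    (u : (∀ j, A j) → ℝ) (ε : ℝ) (j' : Fin n)
    (hu : ∀ (a : ∀ j, A j) (b : A j'), |u (Function.update a j' b) - u a| ≤ ε)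
    (y : ∀ j, A j → ℝ) (w : A j' → ℝ)
    (hy0 : ∀ k b, 0 ≤ y k b)
    (hsum : ∑ b, y j' b = ∑ b, w b)
    (hy1 : ∀ k, k ≠ j' → ∑ b, y k b = 1) :
    |(∑ a : ∀ j, A j, (∏ j, y j (a j)) * u a) -
      ∑ a : ∀ j, A j, (∏ j, (Function.update y j' w) j (a j)) * u a|
      ≤ ε * ∑ b, |y j' b - w b| := by
  classical
  have hε : 0 ≤ ε := le_trans (abs_nonneg _) (hu (Classical.arbitrary _) (Classical.arbitrary _))
  set e := Equiv.piSplitAt j' A with he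
  set Q : (∀ k : {k // k ≠ j'}, A k) → ℝ := fun g => ∏ k : {k // k ≠ j'}, y k.1 (g k) with hQ
  set d : A j' → ℝ := fun b => y j' b - w b with hdd
  have hd : ∑ b, d b = 0 := by simp [hdd, Finset.sum_sub_distrib, hsum]
  have ha1 : ∀ (b : A j') g, (e.symm (b, g)) j' = b := by
    intro b g
    exact congrArg Prod.fst (e.apply_symm_apply (b, g))
  have ha2 : ∀ (b : A j') g (k : Fin n) (hk : k ≠ j'), (e.symm (b, g)) k = g ⟨k, hk⟩ := by
    intro b g k hk
    exact congrFun (congrArg Prod.snd (e.apply_symm_apply (b, g))) ⟨k, hk⟩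
  -- product splitting
  have prodsplit : ∀ (v : ∀ j, A j → ℝ) (a : ∀ j, A j),
      ∏ j, v j (a j) = v j' (a j') * ∏ k : {k // k ≠ j'}, v k.1 (a k.1) := by
    intro v a
    rw [Finset.prod_eq_mul_prod_sdiff_singleton_of_mem (Finset.mem_univ j') (fun j => v j (a j))]
    congr 1
    exact Finset.prod_subtype (p := fun k => k ≠ j') (Finset.univ \ {j'})
      (fun k => by simp) (fun k => v k (a k))
  -- sum splitting
  have sumsplit : ∀ f : (∀ j, A j) → ℝ, ∑ a, f a = ∑ b, ∑ g, f (e.symm (b, g)) := by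
    intro f
    rw [← Equiv.sum_comp e.symm f, Fintype.sum_prod_type]
  set U : A j' → (∀ k : {k // k ≠ j'}, A k) → ℝ := fun b g => u (e.symm (b, g)) with hU
  have key : (∑ a : ∀ j, A j, (∏ j, y j (a j)) * u a) -
      (∑ a : ∀ j, A j, (∏ j, (Function.update y j' w) j (a j)) * u a)
      = ∑ b, ∑ g, d b * Q g * U b g := by
    rw [sumsplit, sumsplit (fun a => (∏ j, (Function.update y j' w) j (a j)) * u a),
      ← Finset.sum_sub_distrib]
    refine Finset.sum_congr rfl fun b _ => ?_
    rw [← Finset.sum_sub_distrib]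
    refine Finset.sum_congr rfl fun g _ => ?_
    rw [prodsplit, prodsplit]
    have h1 : (e.symm (b, g)) j' = b := ha1 b g
    have h2 : ∀ k : {k // k ≠ j'}, (e.symm (b, g)) k.1 = g k := fun k => ha2 b g k.1 k.2
    have h3 : ∀ k : {k // k ≠ j'}, (Function.update y j' w) k.1 = y k.1 :=
      fun k => Function.update_of_ne k.2 _ _
    simp only [h1, Function.update_self]
    have h4 : (∏ k : {k // k ≠ j'}, y k.1 ((e.symm (b, g)) k.1)) = Q g := by
      refine Finset.prod_congr rfl fun k _ => by rw [h2 k]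
    have h5 : (∏ k : {k // k ≠ j'}, (Function.update y j' w) k.1 ((e.symm (b, g)) k.1)) = Q g := by
      refine Finset.prod_congr rfl fun k _ => by rw [h3 k, h2 k]
    rw [h4, h5, hU, hdd]
    ring
  rw [key]
  set b₀ : A j' := Classical.arbitrary _ with hb₀
  have hUdiff : ∀ b g, |U b g - U b₀ g| ≤ ε := by
    intro b g
    have hup : e.symm (b, g) = Function.update (e.symm (b₀, g)) j' b := by
      funext k
      rcases eq_or_ne k j' with rfl | hk
      · rw [ha1, Function.update_self]
      · rw [ha2 b g k hk, Function.update_of_ne hk, ha2 b₀ g k hk]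
    rw [hU]
    dsimp only
    rw [hup]
    exact hu _ b
  have hQ0 : ∀ g, 0 ≤ Q g := fun g => Finset.prod_nonneg fun k _ => hy0 _ _
  have hQsum : ∑ g, Q g = 1 := by
    rw [hQ, ← Fintype.prod_sum]
    exact Finset.prod_eq_one fun k _ => hy1 k.1 k.2
  have split2 : ∑ b, ∑ g, d b * Q g * U b g
      = (∑ b, ∑ g, d b * Q g * (U b g - U b₀ g)) + (∑ b, d b) * (∑ g, Q g * U b₀ g) := by
    rw [Finset.sum_mul]
    rw [← Finset.sum_add_distrib]
    refine Finset.sum_congr rfl fun b _ => ?_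
    rw [Finset.mul_sum, ← Finset.sum_add_distrib]
    refine Finset.sum_congr rfl fun g _ => by ring
  rw [split2, hd, zero_mul, add_zero]
  calc |∑ b, ∑ g, d b * Q g * (U b g - U b₀ g)|
      ≤ ∑ b, ∑ g, |d b * Q g * (U b g - U b₀ g)| := by
        refine (Finset.abs_sum_le_sum_abs _ _).trans (Finset.sum_le_sum fun b _ =>
          Finset.abs_sum_le_sum_abs _ _)
    _ ≤ ∑ b, ∑ g, |d b| * Q g * ε := by
        refine Finset.sum_le_sum fun b _ => Finset.sum_le_sum fun g _ => ?_
        rw [abs_mul, abs_mul, abs_of_nonneg (hQ0 g)]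
        exact mul_le_mul_of_nonneg_left (hUdiff b g)
          (mul_nonneg (abs_nonneg _) (hQ0 g))
    _ = ε * ∑ b, |d b| := by
        have h : ∀ b, ∑ g, |d b| * Q g * ε = ε * |d b| := fun b => by
          rw [← Finset.sum_mul, ← Finset.mul_sum, hQsum, mul_one, mul_comm]
        rw [Finset.sum_congr rfl fun b _ => h b, ← Finset.mul_sum]
    _ ≤ ε * ∑ b, |y j' b - w b| := le_refl _

/-- the operator of any n-player normal-form game with strategic sensitivity ε
is ℓ₂-Lipschitz with constant at most ε · n · maxᵢ |Aᵢ| (stated in squared form). -/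
theorem sensitivity_operator_lipschitz
    (n : ℕ) (A : Fin n → Type) [∀ i, Fintype (A i)] [∀ i, DecidableEq (A i)]
    [∀ i, Nonempty (A i)]
    (u : ∀ i, (∀ j, A j) → ℝ) (ε : ℝ) (hε : 0 < ε)
    (hsens : ∀ i (a : ∀ j, A j) (i' : Fin n), i' ≠ i → ∀ b : A i',
      |u i (Function.update a i' b) - u i a| ≤ ε)
    (F : ∀ i, (∀ j, A j → ℝ) → A i → ℝ)
    (hF : ∀ i x ai, F i x ai =
      ∑ a : ∀ j, A j,
        (∏ j, (Function.update x i (fun b => if b = ai then (1:ℝ) else 0)) j (a j)) * u i a)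
    (x x' : ∀ j, A j → ℝ)
    (hx : ∀ i, x i ∈ stdSimplex ℝ (A i)) (hx' : ∀ i, x' i ∈ stdSimplex ℝ (A i)) :
    ∑ i, ∑ ai, (F i x ai - F i x' ai) ^ 2 ≤
      (ε * (n : ℝ) * ((Finset.univ.sup fun i => Fintype.card (A i) : ℕ) : ℝ)) ^ 2 *
        ∑ i, ∑ ai, (x i ai - x' i ai) ^ 2 := by
  classical
  set M : ℝ := ((Finset.univ.sup fun i => Fintype.card (A i) : ℕ) : ℝ) with hM
  set D : ℝ := ∑ j, ∑ b, |x j b - x' j b| with hD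
  have hD0 : 0 ≤ D := Finset.sum_nonneg fun j _ => Finset.sum_nonneg fun b _ => abs_nonneg _
  -- the core Lipschitz bound for each coordinate
  have key : ∀ i ai, |F i x ai - F i x' ai| ≤ ε * D := by
    intro i ai
    set δ : A i → ℝ := fun b => if b = ai then (1:ℝ) else 0 with hδ
    have hδ0 : ∀ b, 0 ≤ δ b := fun b => by rw [hδ]; dsimp only; split <;> norm_num
    have hδ1 : ∑ b, δ b = 1 := by rw [hδ]; simp
    set y := Function.update x i δ with hy
    set y' := Function.update x' i δ with hy'
    have hy0 : ∀ k b, 0 ≤ y k b := by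
      intro k b; rcases eq_or_ne k i with rfl | h
      · rw [hy, Function.update_self]; exact hδ0 b
      · rw [hy, Function.update_of_ne h]; exact (hx k).1 b
    have hy'0 : ∀ k b, 0 ≤ y' k b := by
      intro k b; rcases eq_or_ne k i with rfl | h
      · rw [hy', Function.update_self]; exact hδ0 b
      · rw [hy', Function.update_of_ne h]; exact (hx' k).1 b
    have hy1 : ∀ k, ∑ b, y k b = 1 := by
      intro k; rcases eq_or_ne k i with rfl | h
      · rw [hy, Function.update_self]; exact hδ1
      · rw [hy, Function.update_of_ne h]; exact (hx k).2
    have hy'1 : ∀ k, ∑ b, y' k b = 1 := by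
      intro k; rcases eq_or_ne k i with rfl | h
      · rw [hy', Function.update_self]; exact hδ1
      · rw [hy', Function.update_of_ne h]; exact (hx' k).2
    set G : (∀ j, A j → ℝ) → ℝ := fun v => ∑ a : ∀ j, A j, (∏ j, v j (a j)) * u i a with hG
    have hFx : F i x ai = G y := hF i x ai
    have hFx' : F i x' ai = G y' := hF i x' ai
    set H : ℕ → ∀ j, A j → ℝ := fun m j => if (j : ℕ) < m then y' j else y j with hH
    have hH0 : H 0 = y := by funext j; rw [hH]; exact if_neg (by omega)
    have hHn : H n = y' := by funext j; rw [hH]; exact if_pos j.isLt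
    have tele : G y - G y' = ∑ j : Fin n, (G (H j.1) - G (H (j.1 + 1))) := by
      rw [Fin.sum_univ_eq_sum_range (fun m => G (H m) - G (H (m + 1))) n,
        Finset.sum_range_sub' (fun m => G (H m)), hH0, hHn]
    have stepb : ∀ j : Fin n, |G (H j.1) - G (H (j.1 + 1))| ≤ ε * ∑ b, |x j b - x' j b| := by
      intro j
      rcases eq_or_ne j i with rfl | hji
      · -- player j = i : nothing changes
        have hsame : H (j.1 + 1) = H j.1 := by
          funext k
          rw [hH]; dsimp only
          rcases lt_trichotomy (k : ℕ) j.1 with h | h | h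
          · rw [if_pos (h.trans (Nat.lt_succ_self _)), if_pos h]
          · have hk : k = j := Fin.val_injective h
            subst hk
            rw [if_pos (by omega), if_neg (by omega), hy, hy',
              Function.update_self, Function.update_self]
          · rw [if_neg (by omega), if_neg (by omega)]
        rw [hsame, sub_self, abs_zero]
        exact mul_nonneg hε.le (Finset.sum_nonneg fun b _ => abs_nonneg _)
      · -- player j ≠ i : apply the one-step bound
        have hupdate : H (j.1 + 1) = Function.update (H j.1) j (y' j) := by
          funext k
          rcases eq_or_ne k j with rfl | hk
          · rw [Function.update_self, hH]; dsimp only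
            rw [if_pos (Nat.lt_succ_self _)]
          · rw [Function.update_of_ne hk, hH]; dsimp only
            have hkv : (k : ℕ) ≠ j.1 := fun h => hk (Fin.val_injective h)
            by_cases h : (k : ℕ) < j.1
            · rw [if_pos (by omega), if_pos h]
            · rw [if_neg (by omega), if_neg h]
        have hH0' : ∀ k b, 0 ≤ H j.1 k b := by
          intro k b; rw [hH]; dsimp only
          split
          · exact hy'0 k b
          · exact hy0 k b
        have hHsum : ∀ k, ∑ b, H j.1 k b = 1 := by
          intro k; rw [hH]; dsimp only
          split
          · exact hy'1 k
          · exact hy1 k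
        have hHj : H j.1 j = y j := by rw [hH]; dsimp only; rw [if_neg (lt_irrefl _)]
        have hmain := step_bound (u i) ε j (fun a b => hsens i a j hji b)
          (H j.1) (y' j) hH0' (by rw [hHsum j, hy'1 j]) (fun k _ => hHsum k)
        rw [hupdate]
        have heq : ∑ b, |H j.1 j b - y' j b| = ∑ b, |x j b - x' j b| := by
          refine Finset.sum_congr rfl fun b _ => ?_
          rw [hHj, hy, hy', Function.update_of_ne hji, Function.update_of_ne hji]
        calc |G (H j.1) - G (Function.update (H j.1) j (y' j))|
            ≤ ε * ∑ b, |H j.1 j b - y' j b| := hmain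
          _ = ε * ∑ b, |x j b - x' j b| := by rw [heq]
    rw [hFx, hFx', tele]
    calc |∑ j : Fin n, (G (H j.1) - G (H (j.1 + 1)))|
        ≤ ∑ j : Fin n, |G (H j.1) - G (H (j.1 + 1))| := Finset.abs_sum_le_sum_abs _ _
      _ ≤ ∑ j : Fin n, ε * ∑ b, |x j b - x' j b| := Finset.sum_le_sum fun j _ => stepb j
      _ = ε * D := by rw [hD, Finset.mul_sum]
  -- numeric conclusion
  have hM0 : 0 ≤ M := Nat.cast_nonneg _
  have hcard : ∀ j : Fin n, (Fintype.card (A j) : ℝ) ≤ M := by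
    intro j; rw [hM]; exact_mod_cast Finset.le_sup (f := fun i => Fintype.card (A i)) (Finset.mem_univ j)
  set K : ℝ := ∑ j : Fin n, (Fintype.card (A j) : ℝ) with hK
  have hK0 : 0 ≤ K := Finset.sum_nonneg fun j _ => Nat.cast_nonneg _
  have hKnM : K ≤ (n : ℝ) * M := by
    rw [hK]
    calc ∑ j : Fin n, (Fintype.card (A j) : ℝ) ≤ ∑ _j : Fin n, M :=
          Finset.sum_le_sum fun j _ => hcard j
      _ = (n : ℝ) * M := by
          rw [Finset.sum_const, Finset.card_univ, Fintype.card_fin, nsmul_eq_mul]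
  set T : ℝ := ∑ i, ∑ ai, (x i ai - x' i ai) ^ 2 with hT
  have hT0 : 0 ≤ T :=
    Finset.sum_nonneg fun i _ => Finset.sum_nonneg fun ai _ => sq_nonneg _
  have hD2 : D ^ 2 ≤ K * T := by
    have hflat : D = ∑ p : (Σ j, A j), |x p.1 p.2 - x' p.1 p.2| := by
      rw [hD, ← Finset.univ_sigma_univ, Finset.sum_sigma]
    have hflatT : T = ∑ p : (Σ j, A j), (x p.1 p.2 - x' p.1 p.2) ^ 2 := by
      rw [hT, ← Finset.univ_sigma_univ, Finset.sum_sigma]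
    have hcardsig : ((Finset.univ : Finset (Σ j, A j)).card : ℝ) = K := by
      rw [hK, Finset.card_univ, Fintype.card_sigma]
      push_cast
      rfl
    calc D ^ 2 = (∑ p : (Σ j, A j), |x p.1 p.2 - x' p.1 p.2|) ^ 2 := by rw [hflat]
      _ ≤ ((Finset.univ : Finset (Σ j, A j)).card : ℝ) *
            ∑ p : (Σ j, A j), |x p.1 p.2 - x' p.1 p.2| ^ 2 := by
          exact sq_sum_le_card_mul_sum_sq
      _ = K * T := by
          rw [hcardsig, hflatT]
          congr 1
          exact Finset.sum_congr rfl fun p _ => sq_abs _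
  have hLHS : ∑ i, ∑ ai, (F i x ai - F i x' ai) ^ 2 ≤ K * (ε * D) ^ 2 := by
    calc ∑ i, ∑ ai, (F i x ai - F i x' ai) ^ 2
        ≤ ∑ i, ∑ _ai : A i, (ε * D) ^ 2 := by
          refine Finset.sum_le_sum fun i _ => Finset.sum_le_sum fun ai _ => ?_
          rw [← sq_abs]
          exact pow_le_pow_left₀ (abs_nonneg _) (key i ai) 2
      _ = K * (ε * D) ^ 2 := by
          simp only [Finset.sum_const, Finset.card_univ, nsmul_eq_mul]
          rw [← Finset.sum_mul, hK]
  have hKK : K * K ≤ ((n : ℝ) * M) * ((n : ℝ) * M) :=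
    mul_le_mul hKnM hKnM hK0 (le_trans hK0 hKnM)
  calc ∑ i, ∑ ai, (F i x ai - F i x' ai) ^ 2
      ≤ K * (ε * D) ^ 2 := hLHS
    _ = K * (ε ^ 2 * D ^ 2) := by ring
    _ ≤ K * (ε ^ 2 * (K * T)) := by
        refine mul_le_mul_of_nonneg_left (mul_le_mul_of_nonneg_left hD2 (sq_nonneg ε)) hK0
    _ = (ε ^ 2 * T) * (K * K) := by ring
    _ ≤ (ε ^ 2 * T) * (((n : ℝ) * M) * ((n : ℝ) * M)) :=
        mul_le_mul_of_nonneg_left hKK (mul_nonneg (sq_nonneg ε) hT0)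
    _ = (ε * (n : ℝ) * M) ^ 2 * T := by ring
end

section
/- Best-response gap bound for clairvoyant gradient descent: if x^(t) = Π_{x^(t-1)}(η F(w^(t))) componentwise, then for each player i, BRGapᵢ(x^(t)) ≤ D_{Xᵢ}·‖uᵢ(w₋ᵢ^(t)) - uᵢ(x₋ᵢ^(t))‖₂ + (D_{Xᵢ}/η)·‖xᵢ^(t) - xᵢ^(t-1)‖₂, where BRGapᵢ(x) := max_{xᵢ' ∈ Xᵢ} ⟨xᵢ', uᵢ(x₋ᵢ)⟩ - ⟨xᵢ, uᵢ(x₋ᵢ)⟩. -/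
open scoped RealInnerProductSpace

/-- best-response gap bound for clairvoyant gradient descent:
BRGapᵢ(x^(t)) ≤ Dᵢ‖uᵢ(w₋ᵢ^(t)) - uᵢ(x₋ᵢ^(t))‖ + (Dᵢ/η)‖xᵢ^(t) - xᵢ^(t-1)‖. -/
theorem cgd_brgap_bound
    (n : ℕ) (d : Fin n → ℕ)
    (X : ∀ i, Set (EuclideanSpace ℝ (Fin (d i))))
    (hconv : ∀ i, Convex ℝ (X i))
    (D : Fin n → ℝ) (hD : ∀ i, ∀ a ∈ X i, ∀ b ∈ X i, ‖a - b‖ ≤ D i)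
    (u : ∀ i, (∀ j, EuclideanSpace ℝ (Fin (d j))) → EuclideanSpace ℝ (Fin (d i)))
    (η : ℝ) (hη : 0 < η)
    (xprev xcur w : ∀ j, EuclideanSpace ℝ (Fin (d j)))
    (hxprev : ∀ i, xprev i ∈ X i)
    (hprox : ∀ i, xcur i ∈ X i ∧ ∀ y ∈ X i,
      ⟪y, η • u i w⟫ - 1 / 2 * ‖xprev i - y‖ ^ 2 ≤
        ⟪xcur i, η • u i w⟫ - 1 / 2 * ‖xprev i - xcur i‖ ^ 2)
    (i : Fin n) :
    ∀ b ∈ X i, ⟪b - xcur i, u i xcur⟫ ≤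
      D i * ‖u i w - u i xcur‖ + (D i / η) * ‖xcur i - xprev i‖ := by
  intro b hb
  set c := xcur i with hc
  set p := xprev i with hp
  obtain ⟨hcX, hopt⟩ := hprox i
  have hDnn : 0 ≤ D i := le_trans (by simp) (hD i c hcX c hcX)
  have hbc : ‖b - c‖ ≤ D i := hD i b hb c hcX
  have hbcnn : (0:ℝ) ≤ ‖b - c‖ := norm_nonneg _
  -- first-order optimality: ⟪b - c, η • u i w + (p - c)⟫ ≤ 0
  have key : ⟪b - c, η • u i w⟫ + ⟪p - c, b - c⟫ ≤ 0 := by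
    set a : ℝ := ⟪b - c, η • u i w⟫ + ⟪p - c, b - c⟫ with ha
    have hstep : ∀ t : ℝ, 0 < t → t ≤ 1 → a ≤ t / 2 * ‖b - c‖ ^ 2 := by
      intro t ht ht1
      have hyX : c + t • (b - c) ∈ X i := by
        have := hconv i hcX hb (a := 1 - t) (b := t) (by linarith) (le_of_lt ht)
          (by ring)
        convert this using 1
        module
      have h := hopt _ hyX
      have h1 : ⟪c + t • (b - c), η • u i w⟫
          = ⟪c, η • u i w⟫ + t * ⟪b - c, η • u i w⟫ := by
        rw [inner_add_left, real_inner_smul_left]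
      have h2 : ‖p - (c + t • (b - c))‖ ^ 2
          = ‖p - c‖ ^ 2 - 2 * (t * ⟪p - c, b - c⟫) + t ^ 2 * ‖b - c‖ ^ 2 := by
        have hrw : p - (c + t • (b - c)) = (p - c) - t • (b - c) := by abel
        rw [hrw, @norm_sub_sq_real, real_inner_smul_right, norm_smul, mul_pow,
          Real.norm_eq_abs, sq_abs]
      rw [h1, h2] at h
      have h' : t * a ≤ t * (t / 2 * ‖b - c‖ ^ 2) := by
        simp only [ha]; nlinarith [h]
      exact le_of_mul_le_mul_left h' ht
    by_contra hpos
    push_neg at hpos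
    set C := ‖b - c‖ ^ 2 with hC
    have hCnn : 0 ≤ C := sq_nonneg _
    have ht0 : 0 < min 1 (a / (C + 1)) := by
      apply lt_min one_pos
      positivity
    have := hstep _ ht0 (min_le_left _ _)
    have h2 : min 1 (a / (C + 1)) / 2 * C ≤ (a / (C + 1)) * C := by
      apply mul_le_mul_of_nonneg_right _ hCnn
      calc min 1 (a / (C + 1)) / 2 ≤ (a / (C + 1)) / 2 := by
            apply div_le_div_of_nonneg_right (min_le_right _ _) (by norm_num)
        _ ≤ a / (C + 1) := by
            have : 0 ≤ a / (C + 1) := by positivity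
            linarith
    have h3 : (a / (C + 1)) * C < a := by
      rw [div_mul_eq_mul_div, div_lt_iff₀ (by linarith)]
      nlinarith
    linarith
  -- hence ⟪b - c, u i w⟫ ≤ (1/η) * (D i * ‖c - p‖)
  have hw : η * ⟪b - c, u i w⟫ ≤ D i * ‖c - p‖ := by
    have h1 : ⟪b - c, η • u i w⟫ = η * ⟪b - c, u i w⟫ := real_inner_smul_right _ _ _
    have h2 : ⟪c - p, b - c⟫ ≤ ‖c - p‖ * ‖b - c‖ := real_inner_le_norm _ _
    have h3 : ⟪p - c, b - c⟫ = - ⟪c - p, b - c⟫ := by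
      rw [← inner_neg_left]; congr 1; abel
    have h4 : ‖c - p‖ * ‖b - c‖ ≤ ‖c - p‖ * D i :=
      mul_le_mul_of_nonneg_left hbc (norm_nonneg _)
    rw [h1, h3] at key
    nlinarith
  have hsplit : ⟪b - c, u i xcur⟫
      = ⟪b - c, u i xcur - u i w⟫ + ⟪b - c, u i w⟫ := by
    rw [← inner_add_right]; congr 1; abel
  have hcs : ⟪b - c, u i xcur - u i w⟫ ≤ D i * ‖u i w - u i xcur‖ := by
    calc ⟪b - c, u i xcur - u i w⟫ ≤ ‖b - c‖ * ‖u i xcur - u i w‖ :=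
          real_inner_le_norm _ _
      _ = ‖b - c‖ * ‖u i w - u i xcur‖ := by rw [norm_sub_rev (u i xcur)]
      _ ≤ D i * ‖u i w - u i xcur‖ :=
          mul_le_mul_of_nonneg_right hbc (norm_nonneg _)
  have hw' : ⟪b - c, u i w⟫ ≤ (D i / η) * ‖xcur i - xprev i‖ := by
    rw [div_mul_eq_mul_div, le_div_iff₀ hη]
    calc ⟪b - c, u i w⟫ * η = η * ⟪b - c, u i w⟫ := by ring
      _ ≤ D i * ‖c - p‖ := hw
      _ = D i * ‖xcur i - xprev i‖ := by rw [hc, hp]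
  rw [hsplit]
  linarith
end

section
/- In the setting of optimistic gradient descent with learning rate η ≤ 1/(4L) in a game whose operator is L-Lipschitz, the sum of the players' regrets satisfies Σᵢ Regᵢ^(T) ≤ (1/(2η))Σᵢ D_{Xᵢ}² - (1/(4η))Σ_{t=1}^T (‖x^(t) - x̂^(t)‖₂² + ‖x^(t) - x̂^(t+1)‖₂²). -/
open scoped RealInnerProductSpace

section aux
variable {E : Type*} [NormedAddCommGroup E] [InnerProductSpace ℝ E]

lemma vi_of_min {X : Set E} (hX : Convex ℝ X) {z : E} (hz : z ∈ X) (p : E)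
    (hmin : ∀ y ∈ X, ‖p - z‖ ≤ ‖p - y‖) : ∀ y ∈ X, ⟪p - z, y - z⟫ ≤ 0 := by
  have hinf : ‖p - z‖ = ⨅ w : X, ‖p - w‖ := by
    haveI : Nonempty X := ⟨⟨z, hz⟩⟩
    refine le_antisymm (le_ciInf fun w => hmin w w.2) ?_
    exact ciInf_le (f := fun w : X => ‖p - (w : E)‖)
      ⟨0, by rintro _ ⟨w, rfl⟩; exact norm_nonneg _⟩ ⟨z, hz⟩
  exact (norm_eq_iInf_iff_real_inner_le_zero hX hz).1 hinf

lemma nonexp_of_vi {z z' p p' : E} (h1 : ⟪p - z, z' - z⟫ ≤ 0) (h2 : ⟪p' - z', z - z'⟫ ≤ 0) :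
    ‖z - z'‖ ≤ ‖p - p'‖ := by
  have key : ‖z - z'‖ ^ 2 ≤ ⟪p - p', z - z'⟫ := by
    have hzz : ⟪z - z', z - z'⟫ = ‖z - z'‖ ^ 2 := real_inner_self_eq_norm_sq _
    simp only [inner_sub_left, inner_sub_right] at h1 h2 hzz ⊢
    linarith [real_inner_comm z z']
  have cs : ⟪p - p', z - z'⟫ ≤ ‖p - p'‖ * ‖z - z'‖ := real_inner_le_norm _ _
  rcases eq_or_lt_of_le (norm_nonneg (z - z')) with h | h
  · rw [← h]; exact norm_nonneg _
  · nlinarith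

lemma round_bound (η : ℝ) (hη : 0 ≤ η) (p q z bb g m : E)
    (hA : ⟪(p + η • m) - z, q - z⟫ ≤ 0)
    (hB : ⟪(p + η • g) - q, bb - q⟫ ≤ 0)
    (hne : ‖z - q‖ ≤ η * ‖g - m‖) :
    η * ⟪bb - z, g⟫ ≤ (‖bb - p‖ ^ 2 - ‖bb - q‖ ^ 2) / 2 - ‖z - p‖ ^ 2 / 2
      - ‖z - q‖ ^ 2 / 2 + η ^ 2 * ‖g - m‖ ^ 2 := by
  have h1 : η * ⟪g, bb - q⟫ ≤ ⟪q - p, bb - q⟫ := by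
    simp only [inner_sub_left, inner_add_left, real_inner_smul_left] at hB ⊢
    linarith
  have h2 : η * ⟪m, q - z⟫ ≤ ⟪z - p, q - z⟫ := by
    simp only [inner_sub_left, inner_add_left, real_inner_smul_left] at hA ⊢
    linarith
  have h3 : η * ⟪g - m, q - z⟫ ≤ η ^ 2 * ‖g - m‖ ^ 2 := by
    have cs : ⟪g - m, q - z⟫ ≤ ‖g - m‖ * ‖q - z‖ := real_inner_le_norm _ _
    have hqz : ‖q - z‖ ≤ η * ‖g - m‖ := by rwa [norm_sub_rev]
    nlinarith [norm_nonneg (g - m), norm_nonneg (q - z)]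
  have id1 : 2 * ⟪q - p, bb - q⟫ = ‖bb - p‖ ^ 2 - ‖q - p‖ ^ 2 - ‖bb - q‖ ^ 2 := by
    have := norm_add_sq_real (bb - q) (q - p)
    rw [sub_add_sub_cancel] at this
    rw [real_inner_comm]
    linarith
  have id2 : 2 * ⟪z - p, q - z⟫ = ‖q - p‖ ^ 2 - ‖z - p‖ ^ 2 - ‖q - z‖ ^ 2 := by
    have := norm_add_sq_real (q - z) (z - p)
    rw [sub_add_sub_cancel] at this
    rw [real_inner_comm]
    linarith
  have decomp : ⟪bb - z, g⟫ = ⟪g, bb - q⟫ + ⟪g - m, q - z⟫ + ⟪m, q - z⟫ := by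
    simp only [inner_sub_left, inner_sub_right]
    linear_combination real_inner_comm g bb - real_inner_comm g z
  have expand : η * ⟪bb - z, g⟫ = η * ⟪g, bb - q⟫ + η * ⟪g - m, q - z⟫ + η * ⟪m, q - z⟫ := by
    rw [decomp]; ring
  have hrev : ‖q - z‖ ^ 2 = ‖z - q‖ ^ 2 := by rw [norm_sub_rev]
  linarith

lemma telescope_icc (f : ℕ → ℝ) (T : ℕ) :
    ∑ t ∈ Finset.Icc 1 T, (f t - f (t + 1)) = f 1 - f (T + 1) := by
  induction T with
  | zero => simp
  | succ n ih => rw [Finset.sum_Icc_succ_top (Nat.succ_le_succ n.zero_le), ih]; ring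

lemma shift_icc (f : ℕ → ℝ) (h0 : f 0 = 0) (hpos : ∀ t, 0 ≤ f t) (T : ℕ) :
    ∑ t ∈ Finset.Icc 1 T, f (t - 1) ≤ ∑ t ∈ Finset.Icc 1 T, f t := by
  have key : ∀ S : ℕ, ∑ t ∈ Finset.Icc 1 S, f (t - 1) = ∑ t ∈ Finset.Icc 1 S, f t + f 0 - f S := by
    intro S
    induction S with
    | zero => simp
    | succ n ih =>
        rw [Finset.sum_Icc_succ_top (Nat.succ_le_succ n.zero_le),
          Finset.sum_Icc_succ_top (Nat.succ_le_succ n.zero_le), ih]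
        simp
        ring
  rw [key]
  have := hpos T
  linarith

end aux


set_option maxHeartbeats 1600000 in
/-- RVU-type sum-of-regrets upper bound for optimistic gradient descent with
η ≤ 1/(4L) in a game with an L-Lipschitz operator. -/
theorem ogd_sum_regret_rvu
    (n : ℕ) (d : Fin n → ℕ)
    (X : ∀ i, Set (EuclideanSpace ℝ (Fin (d i))))
    (hne : ∀ i, (X i).Nonempty) (hconv : ∀ i, Convex ℝ (X i))
    (hcomp : ∀ i, IsCompact (X i))
    (D : Fin n → ℝ) (hD : ∀ i, ∀ a ∈ X i, ∀ b ∈ X i, ‖a - b‖ ≤ D i)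
    (u : ∀ i, (∀ j, EuclideanSpace ℝ (Fin (d j))) → EuclideanSpace ℝ (Fin (d i)))
    (L η : ℝ) (hL : 0 < L) (hη : 0 < η) (hηL : η ≤ 1 / (4 * L))
    (hFLip : ∀ a b, ∑ i, ‖u i a - u i b‖ ^ 2 ≤ L ^ 2 * ∑ j, ‖a j - b j‖ ^ 2)
    (x xhat : ℕ → ∀ j, EuclideanSpace ℝ (Fin (d j)))
    (hx0 : x 0 = xhat 1)
    (hxhat1 : ∀ i, xhat 1 i ∈ X i)
    (hxt : ∀ t ≥ 1, ∀ i, x t i ∈ X i ∧ ∀ y ∈ X i,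
      ‖xhat t i + η • u i (x (t - 1)) - x t i‖ ≤ ‖xhat t i + η • u i (x (t - 1)) - y‖)
    (hxhat : ∀ t ≥ 1, ∀ i, xhat (t + 1) i ∈ X i ∧ ∀ y ∈ X i,
      ‖xhat t i + η • u i (x t) - xhat (t + 1) i‖ ≤ ‖xhat t i + η • u i (x t) - y‖)
    (T : ℕ)
    (b : ∀ j, EuclideanSpace ℝ (Fin (d j))) (hb : ∀ i, b i ∈ X i) :
    ∑ i, ∑ t ∈ Finset.Icc 1 T, ⟪b i - x t i, u i (x t)⟫ ≤
      (1 / (2 * η)) * ∑ i, D i ^ 2 -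
        (1 / (4 * η)) * ∑ t ∈ Finset.Icc 1 T,
          ((∑ i, ‖x t i - xhat t i‖ ^ 2) + ∑ i, ‖x t i - xhat (t + 1) i‖ ^ 2) := by
  have hη16 : η ^ 2 * L ^ 2 ≤ 1 / 16 := by
    have h4 : η * (4 * L) ≤ 1 := by
      rw [← le_div_iff₀ (by positivity)]; exact hηL
    nlinarith [mul_nonneg hη.le hL.le]
  -- per-player per-round bound
  have perround : ∀ t, 1 ≤ t → ∀ i,
      η * ⟪b i - x t i, u i (x t)⟫ ≤
        (‖b i - xhat t i‖ ^ 2 / 2 - ‖b i - xhat (t + 1) i‖ ^ 2 / 2)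
        - ‖x t i - xhat t i‖ ^ 2 / 2 - ‖x t i - xhat (t + 1) i‖ ^ 2 / 2
        + η ^ 2 * ‖u i (x t) - u i (x (t - 1))‖ ^ 2 := by
    intro t ht i
    obtain ⟨hzm, hzmin⟩ := hxt t ht i
    obtain ⟨hqm, hqmin⟩ := hxhat t ht i
    have VIA := vi_of_min (hconv i) hzm (xhat t i + η • u i (x (t - 1))) hzmin
    have VIB := vi_of_min (hconv i) hqm (xhat t i + η • u i (x t)) hqmin
    have hne : ‖x t i - xhat (t + 1) i‖ ≤ η * ‖u i (x t) - u i (x (t - 1))‖ := by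
      have h := nonexp_of_vi (VIA (xhat (t + 1) i) hqm) (VIB (x t i) hzm)
      have e : (xhat t i + η • u i (x (t - 1))) - (xhat t i + η • u i (x t))
          = η • (u i (x (t - 1)) - u i (x t)) := by
        rw [smul_sub]; abel
      rw [e, norm_smul, Real.norm_eq_abs, abs_of_pos hη,
        norm_sub_rev (u i (x (t - 1))) (u i (x t))] at h
      exact h
    have rb := round_bound η hη.le (xhat t i) (xhat (t + 1) i) (x t i) (b i)
      (u i (x t)) (u i (x (t - 1))) (VIA (xhat (t + 1) i) hqm) (VIB (b i) (hb i)) hne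
    linarith
  -- per-round aggregated bound over players
  have pert : ∀ t ∈ Finset.Icc 1 T,
      ∑ i, η * ⟪b i - x t i, u i (x t)⟫ ≤
        (∑ i, (‖b i - xhat t i‖ ^ 2 / 2 - ‖b i - xhat (t + 1) i‖ ^ 2 / 2))
        - (1 / 2) * ∑ i, ‖x t i - xhat t i‖ ^ 2
        - (1 / 2) * ∑ i, ‖x t i - xhat (t + 1) i‖ ^ 2
        + (1 / 8) * ∑ i, ‖x t i - xhat t i‖ ^ 2
        + (1 / 8) * ∑ i, ‖x (t - 1) i - xhat (t - 1 + 1) i‖ ^ 2 := by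
    intro t htmem
    have ht : 1 ≤ t := (Finset.mem_Icc.1 htmem).1
    have htp : t - 1 + 1 = t := Nat.sub_add_cancel ht
    have step1 : ∑ i, η * ⟪b i - x t i, u i (x t)⟫ ≤
        (∑ i, (‖b i - xhat t i‖ ^ 2 / 2 - ‖b i - xhat (t + 1) i‖ ^ 2 / 2))
        - (1 / 2) * ∑ i, ‖x t i - xhat t i‖ ^ 2
        - (1 / 2) * ∑ i, ‖x t i - xhat (t + 1) i‖ ^ 2
        + η ^ 2 * ∑ i, ‖u i (x t) - u i (x (t - 1))‖ ^ 2 := by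
      have hs := Finset.sum_le_sum (fun i (_ : i ∈ Finset.univ) => perround t ht i)
      have he : (∑ i, (‖b i - xhat t i‖ ^ 2 / 2 - ‖b i - xhat (t + 1) i‖ ^ 2 / 2))
          - (1 / 2) * ∑ i, ‖x t i - xhat t i‖ ^ 2
          - (1 / 2) * ∑ i, ‖x t i - xhat (t + 1) i‖ ^ 2
          + η ^ 2 * ∑ i, ‖u i (x t) - u i (x (t - 1))‖ ^ 2 =
          ∑ i, ((‖b i - xhat t i‖ ^ 2 / 2 - ‖b i - xhat (t + 1) i‖ ^ 2 / 2)
          - ‖x t i - xhat t i‖ ^ 2 / 2 - ‖x t i - xhat (t + 1) i‖ ^ 2 / 2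
          + η ^ 2 * ‖u i (x t) - u i (x (t - 1))‖ ^ 2) := by
        rw [Finset.mul_sum, Finset.mul_sum, Finset.mul_sum,
          ← Finset.sum_sub_distrib, ← Finset.sum_sub_distrib,
          ← Finset.sum_add_distrib]
        exact Finset.sum_congr rfl fun i _ => by ring
      rw [he]
      exact hs
    have coordb : ∑ j, ‖x t j - x (t - 1) j‖ ^ 2 ≤
        2 * ∑ i, ‖x t i - xhat t i‖ ^ 2 + 2 * ∑ i, ‖x (t - 1) i - xhat (t - 1 + 1) i‖ ^ 2 := by
      rw [Finset.mul_sum, Finset.mul_sum, ← Finset.sum_add_distrib]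
      apply Finset.sum_le_sum
      intro j _
      rw [htp]
      have tri : ‖x t j - x (t - 1) j‖ ≤ ‖x t j - xhat t j‖ + ‖xhat t j - x (t - 1) j‖ :=
        norm_sub_le_norm_sub_add_norm_sub _ _ _
      have hrev : ‖xhat t j - x (t - 1) j‖ = ‖x (t - 1) j - xhat t j‖ := norm_sub_rev _ _
      rw [hrev] at tri
      nlinarith [tri, sq_nonneg (‖x t j - xhat t j‖ - ‖x (t - 1) j - xhat t j‖),
        norm_nonneg (x t j - x (t - 1) j), norm_nonneg (x t j - xhat t j),
        norm_nonneg (x (t - 1) j - xhat t j)]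
    have lip : η ^ 2 * ∑ i, ‖u i (x t) - u i (x (t - 1))‖ ^ 2 ≤
        (1 / 8) * ∑ i, ‖x t i - xhat t i‖ ^ 2
        + (1 / 8) * ∑ i, ‖x (t - 1) i - xhat (t - 1 + 1) i‖ ^ 2 := by
      have h1 : η ^ 2 * ∑ i, ‖u i (x t) - u i (x (t - 1))‖ ^ 2 ≤
          η ^ 2 * (L ^ 2 * ∑ j, ‖x t j - x (t - 1) j‖ ^ 2) :=
        mul_le_mul_of_nonneg_left (hFLip _ _) (by positivity)
      have hsn : (0 : ℝ) ≤ ∑ j, ‖x t j - x (t - 1) j‖ ^ 2 := by positivity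
      nlinarith [hη16, coordb, sq_nonneg η, sq_nonneg L]
    linarith
  -- global assembly
  have hscal : ∀ P Q : ℝ, η * ((1 / (2 * η)) * P - (1 / (4 * η)) * Q) = P / 2 - Q / 4 := by
    intro P Q
    field_simp
  have key : η * ∑ i, ∑ t ∈ Finset.Icc 1 T, ⟪b i - x t i, u i (x t)⟫ ≤
      η * ((1 / (2 * η)) * ∑ i, D i ^ 2 -
        (1 / (4 * η)) * ∑ t ∈ Finset.Icc 1 T,
          ((∑ i, ‖x t i - xhat t i‖ ^ 2) + ∑ i, ‖x t i - xhat (t + 1) i‖ ^ 2)) := by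
    have lhs_eq : η * ∑ i, ∑ t ∈ Finset.Icc 1 T, ⟪b i - x t i, u i (x t)⟫ =
        ∑ t ∈ Finset.Icc 1 T, ∑ i, η * ⟪b i - x t i, u i (x t)⟫ := by
      rw [Finset.mul_sum, Finset.sum_comm]
      exact Finset.sum_congr rfl fun t _ => by rw [Finset.mul_sum]
    have tele : ∑ t ∈ Finset.Icc 1 T,
        ∑ i, (‖b i - xhat t i‖ ^ 2 / 2 - ‖b i - xhat (t + 1) i‖ ^ 2 / 2) ≤
        ∑ i, D i ^ 2 / 2 := by
      rw [Finset.sum_comm]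
      apply Finset.sum_le_sum
      intro i _
      rw [telescope_icc (fun s => ‖b i - xhat s i‖ ^ 2 / 2) T]
      have hd : ‖b i - xhat 1 i‖ ≤ D i := hD i (b i) (hb i) (xhat 1 i) (hxhat1 i)
      have h1 : ‖b i - xhat 1 i‖ ^ 2 ≤ D i ^ 2 := by
        nlinarith [norm_nonneg (b i - xhat 1 i)]
      have h2 : (0 : ℝ) ≤ ‖b i - xhat (T + 1) i‖ ^ 2 / 2 := by positivity
      linarith
    have shift : ∑ t ∈ Finset.Icc 1 T, ∑ i, ‖x (t - 1) i - xhat (t - 1 + 1) i‖ ^ 2 ≤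
        ∑ t ∈ Finset.Icc 1 T, ∑ i, ‖x t i - xhat (t + 1) i‖ ^ 2 := by
      exact shift_icc (fun s => ∑ i, ‖x s i - xhat (s + 1) i‖ ^ 2)
        (by simp [hx0]) (fun s => by positivity) T
    have sumbound := Finset.sum_le_sum pert
    have expand : ∑ t ∈ Finset.Icc 1 T,
        ((∑ i, (‖b i - xhat t i‖ ^ 2 / 2 - ‖b i - xhat (t + 1) i‖ ^ 2 / 2))
        - (1 / 2) * ∑ i, ‖x t i - xhat t i‖ ^ 2
        - (1 / 2) * ∑ i, ‖x t i - xhat (t + 1) i‖ ^ 2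
        + (1 / 8) * ∑ i, ‖x t i - xhat t i‖ ^ 2
        + (1 / 8) * ∑ i, ‖x (t - 1) i - xhat (t - 1 + 1) i‖ ^ 2) =
        (∑ t ∈ Finset.Icc 1 T, ∑ i, (‖b i - xhat t i‖ ^ 2 / 2 - ‖b i - xhat (t + 1) i‖ ^ 2 / 2))
        - (1 / 2) * ∑ t ∈ Finset.Icc 1 T, ∑ i, ‖x t i - xhat t i‖ ^ 2
        - (1 / 2) * ∑ t ∈ Finset.Icc 1 T, ∑ i, ‖x t i - xhat (t + 1) i‖ ^ 2
        + (1 / 8) * ∑ t ∈ Finset.Icc 1 T, ∑ i, ‖x t i - xhat t i‖ ^ 2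
        + (1 / 8) * ∑ t ∈ Finset.Icc 1 T, ∑ i, ‖x (t - 1) i - xhat (t - 1 + 1) i‖ ^ 2 := by
      rw [Finset.mul_sum, Finset.mul_sum, Finset.mul_sum, Finset.mul_sum,
        ← Finset.sum_sub_distrib, ← Finset.sum_sub_distrib,
        ← Finset.sum_add_distrib, ← Finset.sum_add_distrib]
    rw [expand] at sumbound
    have rhs_eq : η * ((1 / (2 * η)) * ∑ i, D i ^ 2 -
        (1 / (4 * η)) * ∑ t ∈ Finset.Icc 1 T,
          ((∑ i, ‖x t i - xhat t i‖ ^ 2) + ∑ i, ‖x t i - xhat (t + 1) i‖ ^ 2)) =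
        (∑ i, D i ^ 2) / 2 -
          (∑ t ∈ Finset.Icc 1 T,
            ((∑ i, ‖x t i - xhat t i‖ ^ 2) + ∑ i, ‖x t i - xhat (t + 1) i‖ ^ 2)) / 4 :=
      hscal _ _
    have split : ∑ t ∈ Finset.Icc 1 T,
        ((∑ i, ‖x t i - xhat t i‖ ^ 2) + ∑ i, ‖x t i - xhat (t + 1) i‖ ^ 2) =
        (∑ t ∈ Finset.Icc 1 T, ∑ i, ‖x t i - xhat t i‖ ^ 2)
        + ∑ t ∈ Finset.Icc 1 T, ∑ i, ‖x t i - xhat (t + 1) i‖ ^ 2 :=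
      Finset.sum_add_distrib
    have hsumD : ∑ i, D i ^ 2 / 2 = (∑ i, D i ^ 2) / 2 := by
      rw [Finset.sum_div]
    have hSA : (0 : ℝ) ≤ ∑ t ∈ Finset.Icc 1 T, ∑ i, ‖x t i - xhat t i‖ ^ 2 := by positivity
    have hSB : (0 : ℝ) ≤ ∑ t ∈ Finset.Icc 1 T, ∑ i, ‖x t i - xhat (t + 1) i‖ ^ 2 := by
      positivity
    rw [lhs_eq, rhs_eq, split]
    linarith
  exact le_of_mul_le_mul_left key hη
end

section
/- Best-response gap bound for OGD: if player i follows optimistic gradient descent with learning rate η > 0, then at every time t, BRGapᵢ(x^(t)) ≤ (D_{Xᵢ}/η + ‖uᵢ^(t)‖₂)·(‖xᵢ^(t) - x̂ᵢ^(t)‖₂ + ‖xᵢ^(t) - x̂ᵢ^(t+1)‖₂). -/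
open scoped RealInnerProductSpace

/-- per-iterate best-response gap bound for optimistic gradient descent:
BRGapᵢ(x^(t)) ≤ (D/η + ‖u^(t)‖)(‖x^(t) - x̂^(t)‖ + ‖x^(t) - x̂^(t+1)‖). -/
theorem ogd_brgap_bound
    (dd : ℕ) (X : Set (EuclideanSpace ℝ (Fin dd)))
    (hconv : Convex ℝ X) (D η : ℝ) (hη : 0 < η)
    (hD : ∀ a ∈ X, ∀ b ∈ X, ‖a - b‖ ≤ D)
    (xhat xt xhat' m u : EuclideanSpace ℝ (Fin dd))
    (hxhat : xhat ∈ X)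
    (hxt : xt ∈ X ∧ ∀ y ∈ X, ‖xhat + η • m - xt‖ ≤ ‖xhat + η • m - y‖)
    (hxhat' : xhat' ∈ X ∧ ∀ y ∈ X, ‖xhat + η • u - xhat'‖ ≤ ‖xhat + η • u - y‖) :
    ∀ b ∈ X, ⟪b - xt, u⟫ ≤ (D / η + ‖u‖) * (‖xt - xhat‖ + ‖xt - xhat'‖) := by
  intro b hb
  set v := xhat + η • u with hv
  haveI : Nonempty X := ⟨⟨xhat', hxhat'.1⟩⟩
  have hinf : ‖v - xhat'‖ = ⨅ w : X, ‖v - w‖ := by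
    refine le_antisymm (le_ciInf fun w => hxhat'.2 w w.2)
      (ciInf_le ⟨0, ?_⟩ (⟨xhat', hxhat'.1⟩ : X))
    rintro _ ⟨w, rfl⟩; exact norm_nonneg _
  have hvi : ∀ w ∈ X, ⟪v - xhat', w - xhat'⟫ ≤ 0 :=
    (norm_eq_iInf_iff_real_inner_le_zero hconv hxhat'.1).mp hinf
  have hvi' := hvi b hb
  have hexp : ⟪v - xhat', b - xhat'⟫
      = ⟪xhat - xhat', b - xhat'⟫ + η * ⟪u, b - xhat'⟫ := by
    rw [hv]
    have : xhat + η • u - xhat' = (xhat - xhat') + η • u := by abel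
    rw [this, inner_add_left, real_inner_smul_left]
  have h1 : η * ⟪u, b - xhat'⟫ ≤ ‖xhat' - xhat‖ * D := by
    have hcs : ⟪xhat - xhat', b - xhat'⟫ ≥ -(‖xhat' - xhat‖ * ‖b - xhat'‖) := by
      have h := abs_real_inner_le_norm (xhat - xhat') (b - xhat')
      rw [norm_sub_rev xhat xhat'] at h
      linarith [neg_abs_le (⟪xhat - xhat', b - xhat'⟫)]
    have hbd : ‖b - xhat'‖ ≤ D := hD b hb xhat' hxhat'.1
    nlinarith [norm_nonneg (xhat' - xhat)]
  have h2 : ⟪xhat' - xt, u⟫ ≤ ‖xt - xhat'‖ * ‖u‖ := by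
    have h := real_inner_le_norm (xhat' - xt) u
    rwa [norm_sub_rev xhat' xt] at h
  have hsplit : ⟪b - xt, u⟫ = ⟪u, b - xhat'⟫ + ⟪xhat' - xt, u⟫ := by
    have hbt : b - xt = (b - xhat') + (xhat' - xt) := by abel
    rw [hbt, inner_add_left, real_inner_comm (b - xhat') u]
  have hD0 : 0 ≤ D := le_trans (norm_nonneg _) (hD xhat hxhat xhat hxhat)
  have htri : ‖xhat' - xhat‖ ≤ ‖xt - xhat‖ + ‖xt - xhat'‖ := by
    have := norm_sub_le_norm_sub_add_norm_sub xhat' xt xhat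
    have h3 : ‖xhat' - xt‖ = ‖xt - xhat'‖ := norm_sub_rev _ _
    linarith
  have hiu : ⟪u, b - xhat'⟫ ≤ D / η * ‖xhat' - xhat‖ := by
    rw [div_mul_eq_mul_div, le_div_iff₀ hη]
    nlinarith
  have hfin1 : D / η ≥ 0 := div_nonneg hD0 hη.le
  nlinarith [norm_nonneg (xt - xhat), norm_nonneg (xt - xhat'), norm_nonneg u,
    norm_nonneg (xhat' - xhat)]
end

section
/- Combining the OGD path-length bound with the per-iterate best-response gap bound: in an n-player (λ,μ)-smooth game with λ ≥ (1-ε)(1+μ), L-Lipschitz operator, and η = 1/(4L), for any T, Σ_{t=1}^T Σᵢ (BRGapᵢ(x^(t)))² ≤ 4·(max_i D_{Xᵢ}²/η² + max_i Bᵢ²)·(2 D_X² + 4η·ε·(1+μ)·OPT·T), where Bᵢ bounds ‖uᵢ(x₋ᵢ)‖₂ and D_X² = Σᵢ D_{Xᵢ}². In particular, with T = D_X²/(2η ε (1+μ) OPT), there exists t* ∈ [T] with Σᵢ (BRGapᵢ(x^(t*)))² ≤ 32·(max_i D_{Xᵢ}²/η² + max_i Bᵢ²)·η·ε·(1+μ)·OPT.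 -/
open scoped RealInnerProductSpace

section OgdHelpers
variable {E : Type*} [NormedAddCommGroup E] [InnerProductSpace ℝ E]

lemma ogd_proj_vi {C : Set E} (hC : Convex ℝ C) {z p : E} (hz : z ∈ C)
    (hmin : ∀ y ∈ C, ‖p - z‖ ≤ ‖p - y‖) {w : E} (hw : w ∈ C) :
    ⟪p - z, w - z⟫ ≤ 0 := by
  have heq : ‖p - z‖ = ⨅ w : C, ‖p - w‖ := by
    have : Nonempty C := ⟨⟨z, hz⟩⟩
    apply le_antisymm
    · exact le_ciInf fun w => hmin w w.2
    · have hbdd : BddBelow (Set.range fun w : C => ‖p - w‖) :=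
        ⟨0, by rintro r ⟨w, rfl⟩; positivity⟩
      exact ciInf_le hbdd ⟨z, hz⟩
  exact (norm_eq_iInf_iff_real_inner_le_zero hC hz).1 heq w hw

lemma ogd_inner_three (a b c : E) :
    ⟪a - b, c - a⟫ = (‖c - b‖^2 - ‖a - b‖^2 - ‖c - a‖^2)/2 := by
  have h : ‖c - b‖^2 = ‖(c - a) + (a - b)‖^2 := by rw [sub_add_sub_cancel]
  rw [norm_add_sq_real] at h
  rw [real_inner_comm]
  linarith

lemma ogd_icc_sum_eq {M : Type*} [AddCommMonoid M] (f : ℕ → M) (T : ℕ) :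
    ∑ t ∈ Finset.Icc 1 T, f t = ∑ j ∈ Finset.range T, f (j+1) := by
  rw [← Finset.Ico_add_one_right_eq_Icc, Finset.sum_Ico_eq_sum_range]
  simp only [Nat.add_sub_cancel, Nat.succ_sub_one]
  exact Finset.sum_congr rfl fun i _ => by rw [Nat.add_comm]

end OgdHelpers

set_option maxHeartbeats 1000000 in
/-- in an n-player (λ,μ)-smooth game with λ ≥ (1-ε)(1+μ), L-Lipschitz
operator and OGD with η = 1/(4L), the cumulative squared best-response gaps satisfy
Σₜ Σᵢ BRGapᵢ(x^(t))² ≤ 4(maxᵢ Dᵢ²/η² + maxᵢ Bᵢ²)(2 D_X² + 4ηε(1+μ)·OPT·T); with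
T ≥ D_X²/(2ηε(1+μ)OPT) some iterate t* has
Σᵢ BRGapᵢ(x^(t*))² ≤ 32(maxᵢ Dᵢ²/η² + maxᵢ Bᵢ²)·ηε(1+μ)·OPT. -/
theorem ogd_cumulative_brgap_bound
    (n : ℕ) (d : Fin n → ℕ)
    (X : ∀ i, Set (EuclideanSpace ℝ (Fin (d i))))
    (hne : ∀ i, (X i).Nonempty) (hconv : ∀ i, Convex ℝ (X i))
    (hcomp : ∀ i, IsCompact (X i))
    (D : Fin n → ℝ) (hD : ∀ i, ∀ a ∈ X i, ∀ b ∈ X i, ‖a - b‖ ≤ D i)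
    (Dmax : ℝ) (hDmax : ∀ i, D i ≤ Dmax) (hDmax0 : 0 ≤ Dmax)
    (u : ∀ i, (∀ j, EuclideanSpace ℝ (Fin (d j))) → EuclideanSpace ℝ (Fin (d i)))
    (hu : ∀ i, Continuous (u i))
    (B : Fin n → ℝ) (hB : ∀ i a, ‖u i a‖ ≤ B i)
    (Bmax : ℝ) (hBmax : ∀ i, B i ≤ Bmax) (hBmax0 : 0 ≤ Bmax)
    (L η : ℝ) (hL : 0 < L) (hη : η = 1 / (4 * L))
    (hFLip : ∀ a b, ∑ i, ‖u i a - u i b‖ ^ 2 ≤ L ^ 2 * ∑ j, ‖a j - b j‖ ^ 2)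
    (OPT lam μ ε : ℝ) (hOPT : 0 < OPT) (hlam : 0 < lam) (hμ : -1 < μ) (hε : 0 < ε)
    (hOPTmax : ∀ a, (∀ i, a i ∈ X i) → ∑ i, ⟪a i, u i a⟫ ≤ OPT)
    (xs : ∀ j, EuclideanSpace ℝ (Fin (d j))) (hxs : ∀ i, xs i ∈ X i)
    (hxsopt : ∑ i, ⟪xs i, u i xs⟫ = OPT)
    (hsmooth : ∀ a, (∀ i, a i ∈ X i) →
      lam * OPT - μ * ∑ i, ⟪a i, u i a⟫ ≤ ∑ i, ⟪xs i, u i a⟫)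
    (hle : (1 - ε) * (1 + μ) ≤ lam)
    (x xhat : ℕ → ∀ j, EuclideanSpace ℝ (Fin (d j)))
    (hx0 : x 0 = xhat 1)
    (hxhat1 : ∀ i, xhat 1 i ∈ X i)
    (hxt : ∀ t ≥ 1, ∀ i, x t i ∈ X i ∧ ∀ y ∈ X i,
      ‖xhat t i + η • u i (x (t - 1)) - x t i‖ ≤ ‖xhat t i + η • u i (x (t - 1)) - y‖)
    (hxhat : ∀ t ≥ 1, ∀ i, xhat (t + 1) i ∈ X i ∧ ∀ y ∈ X i,
      ‖xhat t i + η • u i (x t) - xhat (t + 1) i‖ ≤ ‖xhat t i + η • u i (x t) - y‖)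
    (T : ℕ) :
    (∑ t ∈ Finset.Icc 1 T, ∑ i,
        (sSup ((fun bi => ⟪bi - x t i, u i (x t)⟫) '' X i)) ^ 2 ≤
      4 * (Dmax ^ 2 / η ^ 2 + Bmax ^ 2) *
        (2 * ∑ i, D i ^ 2 + 4 * η * ε * (1 + μ) * OPT * T)) ∧
    (1 ≤ T → (∑ i, D i ^ 2) / (2 * η * ε * (1 + μ) * OPT) ≤ (T : ℝ) →
      ∃ t ∈ Finset.Icc 1 T,
        ∑ i, (sSup ((fun bi => ⟪bi - x t i, u i (x t)⟫) '' X i)) ^ 2 ≤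
          32 * (Dmax ^ 2 / η ^ 2 + Bmax ^ 2) * η * ε * (1 + μ) * OPT) := by
  -- basic positivity facts
  have hη0 : 0 < η := by rw [hη]; exact div_pos one_pos (by linarith)
  have hηne : η ≠ 0 := ne_of_gt hη0
  have hμ1 : 0 < 1 + μ := by linarith
  have hD0 : ∀ i, 0 ≤ D i := fun i => by
    obtain ⟨a, ha⟩ := hne i
    have := hD i a ha a ha
    simpa using this
  have hSD0 : 0 ≤ ∑ i, D i ^ 2 := Finset.sum_nonneg fun i _ => sq_nonneg _
  have hLval : L^2 = 1/(16*η^2) := by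
    rw [hη]; field_simp; ring
  have hP0 : 0 ≤ Dmax^2/η^2 := by positivity
  have hqT0 : 0 ≤ η * (ε*(1+μ)*OPT) * (T:ℝ) :=
    mul_nonneg (mul_nonneg hη0.le
      (mul_nonneg (mul_nonneg hε.le hμ1.le) hOPT.le)) (Nat.cast_nonneg T)
  -- per-step optimistic OGD regret inequality
  have step : ∀ t, 1 ≤ t → ∀ i,
      η * ⟪u i (x t), xs i - x t i⟫ ≤
        (‖xs i - xhat t i‖^2 - ‖xs i - xhat (t+1) i‖^2)/2
        + η^2 * ‖u i (x t) - u i (x (t-1))‖^2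
        - ‖x t i - xhat t i‖^2/2 - ‖xhat (t+1) i - x t i‖^2/4 := by
    intro t ht i
    obtain ⟨hzmem, hzmin⟩ := hxt t ht i
    obtain ⟨hhmem, hhmin⟩ := hxhat t ht i
    have vi1 : ⟪xhat t i + η • u i (x t) - xhat (t+1) i, xs i - xhat (t+1) i⟫ ≤ 0 :=
      ogd_proj_vi (hconv i) hhmem hhmin (hxs i)
    have vi2 : ⟪xhat t i + η • u i (x (t-1)) - x t i, xhat (t+1) i - x t i⟫ ≤ 0 :=
      ogd_proj_vi (hconv i) hzmem hzmin hhmem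
    set gg := u i (x t) with hgg
    set mm := u i (x (t-1)) with hmm
    set zz := x t i with hzz
    set hh := xhat t i with hhh
    set hh' := xhat (t+1) i with hhh'
    have e1 : ⟪hh + η • gg - hh', xs i - hh'⟫
        = ⟪hh - hh', xs i - hh'⟫ + η * ⟪gg, xs i - hh'⟫ := by
      rw [add_sub_right_comm, inner_add_left, real_inner_smul_left]
    have e2 : ⟪hh + η • mm - zz, hh' - zz⟫
        = ⟪hh - zz, hh' - zz⟫ + η * ⟪mm, hh' - zz⟫ := by
      rw [add_sub_right_comm, inner_add_left, real_inner_smul_left]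
    have i1 : ⟪hh' - hh, xs i - hh'⟫
        = (‖xs i - hh‖^2 - ‖hh' - hh‖^2 - ‖xs i - hh'‖^2)/2 := ogd_inner_three hh' hh (xs i)
    have i2 : ⟪zz - hh, hh' - zz⟫
        = (‖hh' - hh‖^2 - ‖zz - hh‖^2 - ‖hh' - zz‖^2)/2 := ogd_inner_three zz hh hh'
    have hneg1 : ⟪hh - hh', xs i - hh'⟫ = -⟪hh' - hh, xs i - hh'⟫ := by
      rw [← neg_sub hh' hh, inner_neg_left]
    have hneg2 : ⟪hh - zz, hh' - zz⟫ = -⟪zz - hh, hh' - zz⟫ := by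
      rw [← neg_sub zz hh, inner_neg_left]
    rw [e1, hneg1, i1] at vi1
    rw [e2, hneg2, i2] at vi2
    have cross : ⟪gg - mm, hh' - zz⟫ ≤ ‖gg - mm‖ * ‖hh' - zz‖ := real_inner_le_norm _ _
    have young : η * (‖gg - mm‖ * ‖hh' - zz‖) ≤ η^2 * ‖gg - mm‖^2 + ‖hh' - zz‖^2/4 := by
      nlinarith only [sq_nonneg (η * ‖gg - mm‖ - ‖hh' - zz‖/2)]
    have b3 : η * ⟪gg - mm, hh' - zz⟫ ≤ η^2 * ‖gg - mm‖^2 + ‖hh' - zz‖^2/4 := by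
      have := mul_le_mul_of_nonneg_left cross hη0.le
      linarith only [this, young]
    have hdec : ⟪gg, xs i - zz⟫ = ⟪gg, xs i - hh'⟫ + ⟪gg - mm, hh' - zz⟫ + ⟪mm, hh' - zz⟫ := by
      have e : xs i - zz = (xs i - hh') + (hh' - zz) := by abel
      rw [e, inner_add_right, inner_sub_left]
      ring
    have hdec2 : η * ⟪gg, xs i - zz⟫
        = η * ⟪gg, xs i - hh'⟫ + η * ⟪gg - mm, hh' - zz⟫ + η * ⟪mm, hh' - zz⟫ := by
      rw [hdec]; ring
    linarith only [vi1, vi2, b3, hdec2]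
  -- per-step best-response-gap bound
  have brgap : ∀ t, 1 ≤ t → ∀ i,
      (sSup ((fun bi => ⟪bi - x t i, u i (x t)⟫) '' X i))^2 ≤
        2*(Dmax^2/η^2) * ‖x t i - xhat t i‖^2
        + 2*Dmax^2 * ‖u i (x t) - u i (x (t-1))‖^2 := by
    intro t ht i
    obtain ⟨hzmem, hzmin⟩ := hxt t ht i
    set gg := u i (x t) with hgg
    set mm := u i (x (t-1)) with hmm
    set zz := x t i with hzz
    have hub : ∀ v ∈ (fun bi => ⟪bi - zz, gg⟫) '' X i,
        v ≤ (D i/η) * ‖zz - xhat t i‖ + D i * ‖gg - mm‖ := by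
      rintro v ⟨bi, hbi, rfl⟩
      show ⟪bi - zz, gg⟫ ≤ D i/η * ‖zz - xhat t i‖ + D i * ‖gg - mm‖
      have hdist : ‖bi - zz‖ ≤ D i := hD i bi hbi zz hzmem
      have h1 : ⟪bi - zz, gg - mm⟫ ≤ D i * ‖gg - mm‖ := by
        calc ⟪bi - zz, gg - mm⟫ ≤ ‖bi - zz‖ * ‖gg - mm‖ := real_inner_le_norm _ _
          _ ≤ D i * ‖gg - mm‖ := mul_le_mul_of_nonneg_right hdist (norm_nonneg _)
      have vi : ⟪xhat t i + η • mm - zz, bi - zz⟫ ≤ 0 :=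
        ogd_proj_vi (hconv i) hzmem hzmin hbi
      have e : ⟪xhat t i + η • mm - zz, bi - zz⟫
          = ⟪xhat t i - zz, bi - zz⟫ + η * ⟪mm, bi - zz⟫ := by
        rw [add_sub_right_comm, inner_add_left, real_inner_smul_left]
      have hneg : ⟪xhat t i - zz, bi - zz⟫ = -⟪zz - xhat t i, bi - zz⟫ := by
        rw [← neg_sub zz (xhat t i), inner_neg_left]
      rw [e, hneg] at vi
      have hcs : ⟪zz - xhat t i, bi - zz⟫ ≤ ‖zz - xhat t i‖ * ‖bi - zz‖ := real_inner_le_norm _ _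
      have hcs2 : ‖zz - xhat t i‖ * ‖bi - zz‖ ≤ ‖zz - xhat t i‖ * D i :=
        mul_le_mul_of_nonneg_left hdist (norm_nonneg _)
      have h2 : η * ⟪mm, bi - zz⟫ ≤ ‖zz - xhat t i‖ * D i := by linarith only [vi, hcs, hcs2]
      have h3 : ⟪mm, bi - zz⟫ ≤ (D i/η) * ‖zz - xhat t i‖ := by
        rw [div_mul_eq_mul_div, le_div_iff₀ hη0]
        linarith only [h2]
      have hdec : ⟪bi - zz, gg⟫ = ⟪mm, bi - zz⟫ + ⟪bi - zz, gg - mm⟫ := by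
        rw [real_inner_comm (bi - zz) mm, inner_sub_right]
        ring
      rw [hdec]
      linarith only [h1, h3]
    have hne' : ((fun bi => ⟪bi - zz, gg⟫) '' X i).Nonempty := (hne i).image _
    have hsle : sSup ((fun bi => ⟪bi - zz, gg⟫) '' X i)
        ≤ (D i/η) * ‖zz - xhat t i‖ + D i * ‖gg - mm‖ := csSup_le hne' hub
    have hsge : 0 ≤ sSup ((fun bi => ⟪bi - zz, gg⟫) '' X i) := by
      apply le_csSup ⟨_, hub⟩
      exact ⟨zz, hzmem, by simp⟩
    have hKK : (D i/η) * ‖zz - xhat t i‖ + D i * ‖gg - mm‖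
        ≤ (Dmax/η) * ‖zz - xhat t i‖ + Dmax * ‖gg - mm‖ := by
      have h1 : D i/η ≤ Dmax/η := (div_le_div_iff_of_pos_right hη0).mpr (hDmax i)
      exact add_le_add (mul_le_mul_of_nonneg_right h1 (norm_nonneg _))
        (mul_le_mul_of_nonneg_right (hDmax i) (norm_nonneg _))
    calc (sSup ((fun bi => ⟪bi - zz, gg⟫) '' X i))^2
        ≤ ((Dmax/η) * ‖zz - xhat t i‖ + Dmax * ‖gg - mm‖)^2 :=
          pow_le_pow_left₀ hsge (le_trans hsle hKK) 2
      _ ≤ 2*(Dmax^2/η^2) * ‖zz - xhat t i‖^2 + 2*Dmax^2 * ‖gg - mm‖^2 := by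
          have hd : (Dmax/η)^2 = Dmax^2/η^2 := div_pow _ _ _
          nlinarith only [sq_nonneg ((Dmax/η) * ‖zz - xhat t i‖ - Dmax * ‖gg - mm‖), hd,
            norm_nonneg (zz - xhat t i), norm_nonneg (gg - mm), hDmax0, hη0]
  -- abbreviations
  set Aq : ℕ → ℝ := fun t => ∑ i, ‖x t i - xhat t i‖^2 with hAq
  set Bq : ℕ → ℝ := fun t => ∑ i, ‖xhat (t+1) i - x t i‖^2 with hBq
  set Cq : ℕ → ℝ := fun t => ∑ i, ‖u i (x t) - u i (x (t-1))‖^2 with hCq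
  set Rq : ℕ → ℝ := fun t => ∑ i, ⟪u i (x t), xs i - x t i⟫ with hRq
  set Gq : ℕ → ℝ :=
    fun t => ∑ i, (sSup ((fun bi => ⟪bi - x t i, u i (x t)⟫) '' X i))^2 with hGq
  set Tele : ℕ → ℝ := fun j => ∑ i, ‖xs i - xhat (j+1) i‖^2 with hTele
  have SA0 : 0 ≤ ∑ j ∈ Finset.range T, Aq (j+1) :=
    Finset.sum_nonneg fun j _ => by simp only [hAq]; positivity
  have SB0 : 0 ≤ ∑ j ∈ Finset.range T, Bq (j+1) :=
    Finset.sum_nonneg fun j _ => by simp only [hBq]; positivity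
  -- smoothness lower bound on instantaneous regret
  have smo : ∀ t, 1 ≤ t → -(ε * (1 + μ) * OPT) ≤ Rq t := by
    intro t ht
    have hmem : ∀ i, x t i ∈ X i := fun i => (hxt t ht i).1
    have h1 := hsmooth (x t) hmem
    have h2 := hOPTmax (x t) hmem
    have heq : Rq t = ∑ i, ⟪xs i, u i (x t)⟫ - ∑ i, ⟪x t i, u i (x t)⟫ := by
      simp only [hRq]
      rw [← Finset.sum_sub_distrib]
      exact Finset.sum_congr rfl fun i _ => by
        rw [real_inner_comm (xs i - x t i) (u i (x t)), inner_sub_left]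
    nlinarith only [mul_le_mul_of_nonneg_left h2 hμ1.le,
      mul_le_mul_of_nonneg_right hle hOPT.le, heq, h1]
  -- shift inequality for Bq
  have hBq0 : Bq 0 = 0 := by
    simp [hBq, hx0]
  have shift : ∑ j ∈ Finset.range T, Bq j ≤ ∑ j ∈ Finset.range T, Bq (j+1) := by
    have h1 := Finset.sum_range_succ' Bq T
    have h2 := Finset.sum_range_succ Bq T
    have h3 : 0 ≤ Bq T := by simp only [hBq]; positivity
    linarith only [h1, h2, h3, hBq0]
  -- Lipschitz bound per step
  have lip' : ∀ j ∈ Finset.range T, Cq (j+1) ≤ 2*L^2*Aq (j+1) + 2*L^2*Bq j := by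
    intro j _
    have h1 := hFLip (x (j+1)) (x j)
    have h2 : Cq (j+1) = ∑ i, ‖u i (x (j+1)) - u i (x j)‖^2 := by
      simp only [hCq, Nat.add_sub_cancel]
    have h3 : ∑ k, ‖x (j+1) k - x j k‖^2 ≤ 2*Aq (j+1) + 2*Bq j := by
      simp only [hAq, hBq, Finset.mul_sum]
      rw [← Finset.sum_add_distrib]
      apply Finset.sum_le_sum
      intro k _
      have tri : ‖x (j+1) k - x j k‖ ≤ ‖x (j+1) k - xhat (j+1) k‖ + ‖xhat (j+1) k - x j k‖ := by
        have e : x (j+1) k - x j k = (x (j+1) k - xhat (j+1) k) + (xhat (j+1) k - x j k) := by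
          abel
        rw [e]; exact norm_add_le _ _
      have tsq : ‖x (j+1) k - x j k‖^2
          ≤ (‖x (j+1) k - xhat (j+1) k‖ + ‖xhat (j+1) k - x j k‖)^2 :=
        pow_le_pow_left₀ (norm_nonneg _) tri 2
      nlinarith only [tsq, sq_nonneg (‖x (j+1) k - xhat (j+1) k‖ - ‖xhat (j+1) k - x j k‖)]
    calc Cq (j+1) = ∑ i, ‖u i (x (j+1)) - u i (x j)‖^2 := h2
      _ ≤ L^2 * ∑ k, ‖x (j+1) k - x j k‖^2 := h1
      _ ≤ L^2 * (2*Aq (j+1) + 2*Bq j) := mul_le_mul_of_nonneg_left h3 (sq_nonneg L)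
      _ = 2*L^2*Aq (j+1) + 2*L^2*Bq j := by ring
  have hSCb : ∑ j ∈ Finset.range T, Cq (j+1)
      ≤ 2*L^2*(∑ j ∈ Finset.range T, Aq (j+1)) + 2*L^2*(∑ j ∈ Finset.range T, Bq (j+1)) := by
    have h := Finset.sum_le_sum lip'
    have hsplit : ∑ j ∈ Finset.range T, (2*L^2*Aq (j+1) + 2*L^2*Bq j)
        = 2*L^2*(∑ j ∈ Finset.range T, Aq (j+1)) + 2*L^2*(∑ j ∈ Finset.range T, Bq j) := by
      rw [Finset.sum_add_distrib, ← Finset.mul_sum, ← Finset.mul_sum]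
    have hmul := mul_le_mul_of_nonneg_left shift (by positivity : (0:ℝ) ≤ 2*L^2)
    linarith only [h, hsplit, hmul]
  -- summed regret inequality (RVU-style)
  have sum1 : η * ∑ j ∈ Finset.range T, Rq (j+1) ≤
      (∑ i, D i ^ 2)/2 + η^2 * ∑ j ∈ Finset.range T, Cq (j+1)
      - (∑ j ∈ Finset.range T, Aq (j+1))/2 - (∑ j ∈ Finset.range T, Bq (j+1))/4 := by
    have hstep : ∀ j ∈ Finset.range T,
        η * Rq (j+1) ≤ (Tele j - Tele (j+1))/2 + η^2 * Cq (j+1)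
          - Aq (j+1)/2 - Bq (j+1)/4 := by
      intro j _
      simp only [hRq, hTele, hCq, hAq, hBq, Finset.mul_sum]
      calc ∑ i, η * ⟪u i (x (j+1)), xs i - x (j+1) i⟫
          ≤ ∑ i, ((‖xs i - xhat (j+1) i‖^2 - ‖xs i - xhat (j+1+1) i‖^2)/2
            + η^2 * ‖u i (x (j+1)) - u i (x (j+1-1))‖^2
            - ‖x (j+1) i - xhat (j+1) i‖^2/2 - ‖xhat (j+1+1) i - x (j+1) i‖^2/4) :=
            Finset.sum_le_sum fun i _ => step (j+1) (Nat.le_add_left 1 j) i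
        _ = _ := by
            simp only [Finset.sum_sub_distrib, Finset.sum_add_distrib, Finset.sum_div,
              Finset.mul_sum, sub_div]
    have h := Finset.sum_le_sum hstep
    rw [← Finset.mul_sum] at h
    have ht : ∑ j ∈ Finset.range T, Tele j - ∑ j ∈ Finset.range T, Tele (j+1)
        = Tele 0 - Tele T := by
      rw [← Finset.sum_sub_distrib]
      exact Finset.sum_range_sub' Tele T
    have hsplit : ∑ j ∈ Finset.range T,
        ((Tele j - Tele (j+1))/2 + η^2 * Cq (j+1) - Aq (j+1)/2 - Bq (j+1)/4)
        = (∑ j ∈ Finset.range T, Tele j)/2 - (∑ j ∈ Finset.range T, Tele (j+1))/2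
          + η^2*(∑ j ∈ Finset.range T, Cq (j+1)) - (∑ j ∈ Finset.range T, Aq (j+1))/2
          - (∑ j ∈ Finset.range T, Bq (j+1))/4 := by
      simp only [Finset.sum_sub_distrib, Finset.sum_add_distrib, Finset.sum_div,
        Finset.mul_sum, sub_div]
    have hT0le : Tele 0 ≤ ∑ i, D i ^ 2 := by
      simp only [hTele]
      apply Finset.sum_le_sum
      intro i _
      have h1 : ‖xs i - xhat (0+1) i‖ ≤ D i := hD i (xs i) (hxs i) (xhat (0+1) i) (hxhat1 i)
      exact pow_le_pow_left₀ (norm_nonneg _) h1 2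
    have hTT0 : 0 ≤ Tele T := by simp only [hTele]; positivity
    linarith only [h, ht, hsplit, hT0le, hTT0]
  -- lower bound on summed regret via smoothness
  have hsmosum : -((ε*(1+μ)*OPT) * (T:ℝ)) ≤ ∑ j ∈ Finset.range T, Rq (j+1) := by
    have h2 : (Finset.range T).card • (-(ε*(1+μ)*OPT)) ≤ ∑ j ∈ Finset.range T, Rq (j+1) :=
      Finset.card_nsmul_le_sum _ _ _ (fun j _ => smo (j+1) (Nat.le_add_left 1 j))
    rw [Finset.card_range, nsmul_eq_mul] at h2
    linarith only [h2]
  -- path-length bound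
  have hη2SC : η^2 * (∑ j ∈ Finset.range T, Cq (j+1))
      ≤ (∑ j ∈ Finset.range T, Aq (j+1))/8 + (∑ j ∈ Finset.range T, Bq (j+1))/8 := by
    have h1 : η^2 * (∑ j ∈ Finset.range T, Cq (j+1))
        ≤ η^2 * (2*L^2*(∑ j ∈ Finset.range T, Aq (j+1))
          + 2*L^2*(∑ j ∈ Finset.range T, Bq (j+1))) :=
      mul_le_mul_of_nonneg_left hSCb (sq_nonneg η)
    have h2 : η^2 * (2*L^2*(∑ j ∈ Finset.range T, Aq (j+1))
        + 2*L^2*(∑ j ∈ Finset.range T, Bq (j+1)))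
        = (∑ j ∈ Finset.range T, Aq (j+1))/8 + (∑ j ∈ Finset.range T, Bq (j+1))/8 := by
      rw [hLval]; field_simp; ring
    linarith only [h1, h2]
  have hpath : 3*(∑ j ∈ Finset.range T, Aq (j+1))/8 + (∑ j ∈ Finset.range T, Bq (j+1))/8
      ≤ (∑ i, D i ^ 2)/2 + η * (ε*(1+μ)*OPT) * (T:ℝ) := by
    have h3 := mul_le_mul_of_nonneg_left hsmosum hη0.le
    linarith only [sum1, hη2SC, h3]
  -- cumulative BRGap bound in terms of path length
  have hGsum : ∑ j ∈ Finset.range T, Gq (j+1) ≤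
      2*(Dmax^2/η^2) * (∑ j ∈ Finset.range T, Aq (j+1))
      + 2*Dmax^2 * (∑ j ∈ Finset.range T, Cq (j+1)) := by
    rw [Finset.mul_sum, Finset.mul_sum, ← Finset.sum_add_distrib]
    apply Finset.sum_le_sum
    intro j _
    simp only [hGq, hAq, hCq, Finset.mul_sum]
    rw [← Finset.sum_add_distrib]
    exact Finset.sum_le_sum fun i _ => brgap (j+1) (Nat.le_add_left 1 j) i
  have hDmSC : 2*Dmax^2 * (∑ j ∈ Finset.range T, Cq (j+1))
      ≤ (Dmax^2/η^2)/4 * (∑ j ∈ Finset.range T, Aq (j+1))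
        + (Dmax^2/η^2)/4 * (∑ j ∈ Finset.range T, Bq (j+1)) := by
    have h1 : 2*Dmax^2 * (∑ j ∈ Finset.range T, Cq (j+1))
        ≤ 2*Dmax^2 * (2*L^2*(∑ j ∈ Finset.range T, Aq (j+1))
          + 2*L^2*(∑ j ∈ Finset.range T, Bq (j+1))) :=
      mul_le_mul_of_nonneg_left hSCb (by positivity)
    have h2 : 2*Dmax^2 * (2*L^2*(∑ j ∈ Finset.range T, Aq (j+1))
        + 2*L^2*(∑ j ∈ Finset.range T, Bq (j+1)))
        = (Dmax^2/η^2)/4 * (∑ j ∈ Finset.range T, Aq (j+1))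
          + (Dmax^2/η^2)/4 * (∑ j ∈ Finset.range T, Bq (j+1)) := by
      rw [hLval]; field_simp; ring
    linarith only [h1, h2]
  -- part 1
  have part1 : ∑ t ∈ Finset.Icc 1 T, Gq t ≤
      4 * (Dmax ^ 2 / η ^ 2 + Bmax ^ 2) *
        (2 * ∑ i, D i ^ 2 + 4 * η * ε * (1 + μ) * OPT * (T:ℝ)) := by
    rw [ogd_icc_sum_eq Gq T]
    nlinarith only [hGsum, hDmSC, hpath, SA0, SB0, hP0, sq_nonneg Bmax, hSD0, hqT0]
  constructor
  · simpa only [hGq] using part1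
  · intro hT1 hT2
    have hccne : (Finset.Icc 1 T).Nonempty := ⟨1, Finset.mem_Icc.mpr ⟨le_refl 1, hT1⟩⟩
    obtain ⟨t0, ht0mem, ht0min⟩ := Finset.exists_min_image (Finset.Icc 1 T) Gq hccne
    refine ⟨t0, ht0mem, ?_⟩
    have hcard : (Finset.Icc 1 T).card = T := by
      rw [Nat.card_Icc]; omega
    have hTG : (T:ℝ) * Gq t0 ≤ ∑ t ∈ Finset.Icc 1 T, Gq t := by
      have h := Finset.card_nsmul_le_sum (Finset.Icc 1 T) Gq (Gq t0) ht0min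
      rwa [hcard, nsmul_eq_mul] at h
    have hpos : 0 < 2 * η * ε * (1 + μ) * OPT := by
      have := mul_pos (mul_pos (mul_pos (mul_pos two_pos hη0) hε) hμ1) hOPT
      linarith
    rw [div_le_iff₀ hpos] at hT2
    have hT0pos : (0:ℝ) < (T:ℝ) := by
      exact_mod_cast Nat.lt_of_lt_of_le Nat.zero_lt_one hT1
    have hC0 : 0 ≤ Dmax^2/η^2 + Bmax^2 := by positivity
    have hfin : Gq t0 ≤ 32 * (Dmax ^ 2 / η ^ 2 + Bmax ^ 2) * η * ε * (1 + μ) * OPT := by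
      nlinarith only [hTG, part1, hT2, hT0pos, hC0, hη0, hε, hμ1, hOPT,
        mul_nonneg (mul_nonneg (mul_nonneg hη0.le hε.le) hμ1.le) hOPT.le]
    simpa only [hGq] using hfin
end

section
/- If in every iteration t ∈ [T] some player has best-response gap exceeding ε, T ≥ 64 L² D_X⁴/ε², and the CGD sum-of-regrets bound Σᵢ Regᵢ^(T) ≤ 4 L D_X² - (1/(8 L D_X²))·ε²·T holds, then Σᵢ Regᵢ^(T) ≤ -(1/(16 L D_X²))·ε²·T; combined with (λ,μ)-smoothness this yields (1/T)Σₜ SW(x^(t)) ≥ ρ(λ,μ)·OPT + ε²/(16(μ+1) L D_X²), hence some iterate exceeds the smoothness welfare bound ρ·OPT by ε²/(16(μ+1) L D_X²). -/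
/-!
Every round contributes at least `ε²` to `Σₜ Σᵢ BRGapᵢ²`, so the CGD bound caps the total regret
by `4LD_X² − ε²T/(8LD_X²)`, which is at most `−ε²T/(16LD_X²)` once `T ≥ 64L²D_X⁴/ε²`.
Fed into the smoothness bound `Σᵢ Regᵢ ≥ λ·OPT·T − (1+μ)Σₜ SW(x⁽ᵗ⁾)`, negative total regret lifts
the average welfare above `ρ·OPT` by `ε²/(16(1+μ)LD_X²)`, and some iterate is at least the average.
-/

open Finset

lemma sq_mul_card_le_sum_sum_sq {ι κ : Type*} [Fintype κ] (S : Finset ι) (g : ι → κ → ℝ)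
    {ε : ℝ} (hε : 0 ≤ ε) (hgap : ∀ t ∈ S, ∃ i, ε < g t i) :
    ε ^ 2 * #S ≤ ∑ t ∈ S, ∑ i, g t i ^ 2 := by
  have hterm : ∀ t ∈ S, ε ^ 2 ≤ ∑ i, g t i ^ 2 := fun t ht => by
    obtain ⟨i, hi⟩ := hgap t ht
    calc ε ^ 2 ≤ g t i ^ 2 := pow_le_pow_left₀ hε hi.le 2
      _ ≤ ∑ j, g t j ^ 2 := single_le_sum (fun j _ => sq_nonneg (g t j)) (mem_univ i)
  simpa [mul_comm] using card_nsmul_le_sum S _ _ hterm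

/-- Once `x ≥ 64K²`, the constant `4K` is absorbed by half of the negative term `x / (8K)`. -/
lemma le_neg_of_le_sub_of_sq_le {K x G R : ℝ} (hK : 0 < K) (hx : 64 * K ^ 2 ≤ x) (hxG : x ≤ G)
    (hR : R ≤ 4 * K - 1 / (8 * K) * G) : R ≤ -(1 / (16 * K) * x) := by
  have hG : 1 / (8 * K) * x ≤ 1 / (8 * K) * G := by gcongr
  have habsorb : 4 * K ≤ 1 / (16 * K) * x := by
    rw [one_div_mul_eq_div, le_div_iff₀ (by positivity)]
    linarith
  have hhalf : 1 / (8 * K) * x = 2 * (1 / (16 * K) * x) := by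
    field_simp
    ring
  linarith

lemma le_average_of_smoothness {lam OPT μ c S T : ℝ} (hμ : -1 < μ) (hT : 0 < T)
    (h : lam * OPT * T - (1 + μ) * S ≤ -(c * T)) :
    lam / (1 + μ) * OPT + c / (1 + μ) ≤ 1 / T * S := by
  have hμ' : 0 < 1 + μ := by linarith
  rw [div_mul_eq_mul_div, ← add_div, div_le_iff₀ hμ', one_div_mul_eq_div, div_mul_eq_mul_div,
    le_div_iff₀ hT]
  linarith

theorem cgd_welfare_improvement_general
    (n T : ℕ) (hT : 0 < T)
    (L DX ε OPT lam μ R : ℝ)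
    (s : ℕ → ℝ) (g : ℕ → Fin n → ℝ)
    (hL : 0 < L) (hDX : 0 < DX) (hε : 0 < ε)
    (hμ : -1 < μ)
    (hgap : ∀ t ∈ Finset.Icc 1 T, ∃ i, ε < g t i)
    (hTlarge : 64 * L ^ 2 * DX ^ 4 / ε ^ 2 ≤ (T : ℝ))
    (hRle : R ≤ 4 * L * DX ^ 2 -
      (1 / (8 * L * DX ^ 2)) * ∑ t ∈ Finset.Icc 1 T, ∑ i, g t i ^ 2)
    (hRge : lam * OPT * T - (1 + μ) * ∑ t ∈ Finset.Icc 1 T, s t ≤ R) :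
    R ≤ -((1 / (16 * L * DX ^ 2)) * ε ^ 2 * T) ∧
    (lam / (1 + μ)) * OPT + ε ^ 2 / (16 * (μ + 1) * L * DX ^ 2) ≤
      (1 / (T : ℝ)) * ∑ t ∈ Finset.Icc 1 T, s t ∧
    ∃ t ∈ Finset.Icc 1 T,
      (lam / (1 + μ)) * OPT + ε ^ 2 / (16 * (μ + 1) * L * DX ^ 2) ≤ s t := by
  have hcard : #(Icc 1 T) = T := by simp
  have hgap_sq := sq_mul_card_le_sum_sum_sq (Icc 1 T) g hε.le hgap
  rw [hcard] at hgap_sq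
  have hTε : 64 * (L * DX ^ 2) ^ 2 ≤ ε ^ 2 * T := by
    rw [div_le_iff₀ (by positivity)] at hTlarge
    linarith
  have hregret : R ≤ -((1 / (16 * L * DX ^ 2)) * ε ^ 2 * T) := by
    simp only [mul_assoc] at hRle ⊢
    exact le_neg_of_le_sub_of_sq_le (by positivity) hTε hgap_sq hRle
  have havg : lam / (1 + μ) * OPT + ε ^ 2 / (16 * (μ + 1) * L * DX ^ 2) ≤
      1 / (T : ℝ) * ∑ t ∈ Icc 1 T, s t := by
    convert le_average_of_smoothness (c := 1 / (16 * L * DX ^ 2) * ε ^ 2) hμ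
      (by exact_mod_cast hT) (hRge.trans hregret) using 2
    field_simp
    ring
  refine ⟨hregret, havg, exists_le_of_le_expect (nonempty_Icc.mpr hT) ?_⟩
  rwa [expect_eq_sum_div_card, hcard, div_eq_inv_mul _ (T : ℝ), ← one_div]

/-- if every iterate has some player with best-response gap exceeding ε,
T ≥ 64L²D_X⁴/ε², and the CGD sum-of-regrets bound holds, then the sum of regrets is at
most −ε²T/(16LD_X²); combined with (λ,μ)-smoothness the average welfare satisfies
(1/T)Σₜ SW(x^(t)) ≥ ρ·OPT + ε²/(16(μ+1)LD_X²), hence some iterate exceeds the smoothness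
bound ρ·OPT by ε²/(16(μ+1)LD_X²). -/
theorem cgd_welfare_improvement
    (n T : ℕ) (hn : 0 < n) (hT : 0 < T)
    (L DX ε OPT lam μ R : ℝ)
    (s : ℕ → ℝ) (g : ℕ → Fin n → ℝ)
    (hL : 0 < L) (hDX : 0 < DX) (hε : 0 < ε) (hOPT : 0 < OPT) (hlam : 0 < lam)
    (hμ : -1 < μ)
    (hgap : ∀ t ∈ Finset.Icc 1 T, ∃ i, ε < g t i)
    (hg0 : ∀ t i, 0 ≤ g t i)
    (hTlarge : 64 * L ^ 2 * DX ^ 4 / ε ^ 2 ≤ (T : ℝ))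
    (hRle : R ≤ 4 * L * DX ^ 2 -
      (1 / (8 * L * DX ^ 2)) * ∑ t ∈ Finset.Icc 1 T, ∑ i, g t i ^ 2)
    (hRge : lam * OPT * T - (1 + μ) * ∑ t ∈ Finset.Icc 1 T, s t ≤ R) :
    R ≤ -((1 / (16 * L * DX ^ 2)) * ε ^ 2 * T) ∧
    (lam / (1 + μ)) * OPT + ε ^ 2 / (16 * (μ + 1) * L * DX ^ 2) ≤
      (1 / (T : ℝ)) * ∑ t ∈ Finset.Icc 1 T, s t ∧
    ∃ t ∈ Finset.Icc 1 T,
      (lam / (1 + μ)) * OPT + ε ^ 2 / (16 * (μ + 1) * L * DX ^ 2) ≤ s t :=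
  cgd_welfare_improvement_general n T hT L DX ε OPT lam μ R s g hL hDX hε hμ hgap hTlarge hRle hRge
end
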